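/- Let t ≥ 2 be an integer and 2 ≤ v_1 ≤ v_2 ≤ ⋯ ≤ v_{t+1}. Then there exists an MCA(N; t, t+1, (v_1, v_2,…, v_{t+1})) of optimum size N = v_2·v_3⋯v_{t+1} = ∏_{i=2}^{t+1} v_i. -/

import Mathlib

/-- An array `A` (rows indexed by `R`, columns by `J`) is of type `v` if every
entry in column `j` lies in `Z_{v j} = {0, 1, …, v j - 1}`. -/
def IsArray {R J : Type*} (v : J → ℕ) (A : R → J → ℕ) : Prop :=
  ∀ r j, A r j < v j

/-- An `s`-way interaction: a set of `s` pairs `(j, σ)` with pairwise distinct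
column indices `j` and value `σ ∈ Z_{v j}`. -/
def IsInteraction {J : Type*} [DecidableEq J] (v : J → ℕ) (s : ℕ)
    (T : Finset (J × ℕ)) : Prop :=
  T.card = s ∧ (T.image Prod.fst).card = s ∧ ∀ p ∈ T, p.2 < v p.1

/-- `rho A T`: the set of rows of `A` in which the interaction `T` is covered. -/
def rho {R J : Type*} [Fintype R] (A : R → J → ℕ) (T : Finset (J × ℕ)) :
    Finset R :=
  Finset.univ.filter fun r => ∀ p ∈ T, A r p.1 = p.2

/-- `rhoSet A 𝒯 = ⋃_{T ∈ 𝒯} rho A T`. -/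
def rhoSet {R J : Type*} [Fintype R] [DecidableEq R] (A : R → J → ℕ)
    (Ts : Finset (Finset (J × ℕ))) : Finset R :=
  Ts.sup (rho A)

/-- A `(d,t)`-detecting array of type `v`: for every `t`-way interaction `T` and
every set `𝒯` of exactly `d` `t`-way interactions,
`ρ(A,T) ⊆ ρ(A,𝒯) ↔ T ∈ 𝒯`. -/
def IsDTA {R J : Type*} [Fintype R] [DecidableEq R] [DecidableEq J] (v : J → ℕ) (d t : ℕ)
    (A : R → J → ℕ) : Prop :=
  IsArray v A ∧
    ∀ T : Finset (J × ℕ), IsInteraction v t T →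
      ∀ Ts : Finset (Finset (J × ℕ)), Ts.card = d →
        (∀ T' ∈ Ts, IsInteraction v t T') →
          (rho A T ⊆ rhoSet A Ts ↔ T ∈ Ts)

/-- A mixed covering array `MCA_λ(N; t, k, v)`: an array of type `v` such that
`|ρ(A,T)| ≥ λ` for every `t`-way interaction `T`. -/
def IsMCA {R J : Type*} [Fintype R] [DecidableEq J] (v : J → ℕ) (lam t : ℕ)
    (A : R → J → ℕ) : Prop :=
  IsArray v A ∧ ∀ T : Finset (J × ℕ), IsInteraction v t T → lam ≤ (rho A T).card

/-- Super-simple of strength `t`: every `(t+1)`-way interaction is covered by at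
most one row. -/
def IsSuperSimple {R J : Type*} [Fintype R] [DecidableEq J] (v : J → ℕ) (t : ℕ)
    (A : R → J → ℕ) : Prop :=
  ∀ T : Finset (J × ℕ), IsInteraction v (t + 1) T → (rho A T).card ≤ 1

/-- An orthogonal array `OA_λ(t, k, v)`: all entries in `Z_v` and
`|ρ(A,T)| = λ` for every `t`-way interaction `T`. (The size requirement
`N = λ·v^t` is imposed on the row-index type in the statements.) -/
def IsOA {R J : Type*} [Fintype R] [DecidableEq J] (vlev lam t : ℕ)
    (A : R → J → ℕ) : Prop :=
  IsArray (fun _ : J => vlev) A ∧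
    ∀ T : Finset (J × ℕ), IsInteraction (fun _ : J => vlev) t T →
      (rho A T).card = lam

/-- `Te` is an extension of the interaction `T`: it is obtained from `T` by
adjoining one pair `(j, σ)` with `σ ∈ Z_{v j}` whose column index `j` occurs in
no pair of `T`. -/
def IsExtension {J : Type*} [DecidableEq J] (v : J → ℕ)
    (T Te : Finset (J × ℕ)) : Prop :=
  ∃ p : J × ℕ, p.2 < v p.1 ∧ (∀ q ∈ T, q.1 ≠ p.1) ∧ Te = insert p T

/-- `A` is `d`-extendible (with respect to strength `t`): for every `t`-way
interaction `T` and every list of `d` extensions `T_1, …, T_d` of `T`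
(repetitions allowed), `ρ(A,T) \ (ρ(A,T_1) ∪ ⋯ ∪ ρ(A,T_d))` is nonempty. -/
def IsExtendible {R J : Type*} [Fintype R] [DecidableEq J] (v : J → ℕ)
    (d t : ℕ) (A : R → J → ℕ) : Prop :=
  ∀ T : Finset (J × ℕ), IsInteraction v t T →
    ∀ Te : Fin d → Finset (J × ℕ), (∀ i, IsExtension v T (Te i)) →
      ∃ r ∈ rho A T, ∀ i, r ∉ rho A (Te i)

/-!
Take as rows all `∏_{j ≠ c} v_j` assignments of the columns other than a column `c` of
fewest levels, and fill column `c` with the row sum modulo `v_c`. A `t`-way interaction on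
`t + 1` columns leaves one column `m` unconstrained. If `m = c` the remaining columns pin
down a row directly; otherwise fix every column but `m` and `c` as prescribed and choose
the entry in `m` (which has at least `v_c` levels) so that the checksum hits the prescribed
value in column `c`.
-/

lemma exists_lt_add_mod_eq {n : ℕ} (hn : 0 < n) (s b : ℕ) : ∃ a < n, (a + s) % n = b % n := by
  have : NeZero n := ⟨hn.ne'⟩
  refine ⟨((b : ZMod n) - s).val, ZMod.val_lt _, ?_⟩
  rw [← ZMod.natCast_eq_natCast_iff']
  simp

lemma IsMCA.comp_equiv {R R' J : Type*} [Fintype R] [Fintype R'] [DecidableEq J] {v : J → ℕ}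
    {lam t : ℕ} {A : R → J → ℕ} (hA : IsMCA v lam t A) (e : R' ≃ R) :
    IsMCA v lam t (A ∘ e) := by
  refine ⟨fun r j => hA.1 (e r) j, fun T hT => ?_⟩
  have : rho (A ∘ e) T = (rho A T).map e.symm.toEmbedding := by
    ext r; simp [rho]
  rw [this, Finset.card_map]
  exact hA.2 T hT

lemma IsInteraction.exists_total_assignment {J : Type*} [DecidableEq J] {v : J → ℕ} {s : ℕ}
    {T : Finset (J × ℕ)} (hT : IsInteraction v s T) (hv : ∀ j, 0 < v j) :
    ∃ g : J → ℕ, (∀ j, g j < v j) ∧ ∀ p ∈ T, g p.1 = p.2 := by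
  classical
  obtain ⟨hcard, himage, hval⟩ := hT
  have hinj : Set.InjOn Prod.fst (T : Set (J × ℕ)) :=
    Finset.card_image_iff.mp (himage.trans hcard.symm)
  refine ⟨fun j => if h : ∃ p ∈ T, p.1 = j then h.choose.2 else 0, fun j => ?_, fun p hp => ?_⟩
  · dsimp only
    split_ifs with h
    · obtain ⟨hmem, hfst⟩ := h.choose_spec
      exact (hval _ hmem).trans_eq (congrArg v hfst)
    · exact hv j
  · have h : ∃ q ∈ T, q.1 = p.1 := ⟨p, hp, rfl⟩
    dsimp only
    rw [dif_pos h, hinj h.choose_spec.1 hp h.choose_spec.2]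

section Checksum

variable {J : Type*} [Fintype J] [DecidableEq J] (v : J → ℕ) (c : J)

def checksumArray (x : (j : {j // j ≠ c}) → Fin (v j)) (j : J) : ℕ :=
  if h : j = c then (∑ i, (x i : ℕ)) % v c else x ⟨j, h⟩

lemma card_checksumArray_rows :
    Fintype.card ((j : {j // j ≠ c}) → Fin (v j)) = ∏ j ∈ Finset.univ.erase c, v j := by
  rw [Fintype.card_pi]
  simp only [Fintype.card_fin]
  exact (Finset.prod_subtype _ (by simp) v).symm

variable {v c}

lemma isArray_checksumArray (hc : 0 < v c) : IsArray v (checksumArray v c) := by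
  intro x j
  unfold checksumArray
  split_ifs with h
  · subst h; exact Nat.mod_lt _ hc
  · exact (x ⟨j, h⟩).isLt

/-- The entry in column `m` is free to correct the checksum, and `v c ≤ v m` leaves it room. -/
lemma exists_checksumArray_eq_off (hc : 0 < v c) {m : J} (hcm : v c ≤ v m) (g : J → ℕ)
    (hg : ∀ j, g j < v j) : ∃ x, ∀ j ≠ m, checksumArray v c x j = g j := by
  by_cases hmc : m = c
  · refine ⟨fun i => ⟨g i, hg i⟩, fun j hj => ?_⟩
    simp [checksumArray, hmc ▸ hj]
  set m' : {j // j ≠ c} := ⟨m, hmc⟩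
  obtain ⟨a, ha, hsum⟩ := exists_lt_add_mod_eq hc (∑ i ∈ Finset.univ.erase m', g i) (g c)
  set y := Function.update (fun i : {j // j ≠ c} => g i) m' a
  have hy : ∀ i, y i < v i := by
    intro i
    by_cases him : i = m'
    · subst him; simpa [y] using ha.trans_le hcm
    · simpa [y, him] using hg i
  refine ⟨fun i => ⟨y i, hy i⟩, fun j hjm => ?_⟩
  by_cases hjc : j = c
  · subst hjc
    have : ∑ i, y i = a + ∑ i ∈ Finset.univ.erase m', g i := by
      rw [Finset.sum_update_of_mem (Finset.mem_univ _), Finset.sdiff_singleton_eq_erase]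
    simp [checksumArray, this, hsum, Nat.mod_eq_of_lt (hg j)]
  · have : (⟨j, hjc⟩ : {j // j ≠ c}) ≠ m' := fun h => hjm (congrArg Subtype.val h)
    simp [checksumArray, hjc, y, this]

lemma isMCA_checksumArray (hc : 0 < v c) (hv : ∀ j, v c ≤ v j) {s : ℕ}
    (hs : s < Fintype.card J) : IsMCA v 1 s (checksumArray v c) := by
  refine ⟨isArray_checksumArray hc, fun T hT => ?_⟩
  obtain ⟨m, -, hm⟩ := Finset.exists_mem_notMem_of_card_lt_card
    (s := T.image Prod.fst) (t := Finset.univ) (by rw [hT.2.1]; exact hs)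
  obtain ⟨g, hg, hgT⟩ := hT.exists_total_assignment fun j => hc.trans_le (hv j)
  obtain ⟨x, hx⟩ := exists_checksumArray_eq_off hc (hv m) g hg
  refine Finset.one_le_card.mpr ⟨x, Finset.mem_filter.mpr ⟨Finset.mem_univ _, fun p hp => ?_⟩⟩
  have hpm : p.1 ≠ m := fun h => hm (h ▸ Finset.mem_image_of_mem _ hp)
  rw [hx _ hpm, hgT p hp]

end Checksum

theorem stmt_18_general {t : ℕ}
    (v : Fin (t + 1) → ℕ) (hmono : Monotone v) (hv2 : 2 ≤ v 0) :
    ∃ A : Fin (∏ i ∈ Finset.univ.filter (fun i : Fin (t + 1) => (i : ℕ) ≠ 0), v i) →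
        Fin (t + 1) → ℕ,
      IsMCA v 1 t A := by
  have hrows : Fintype.card ((j : {j : Fin (t + 1) // j ≠ 0}) → Fin (v j)) =
      ∏ i ∈ Finset.univ.filter (fun i : Fin (t + 1) => (i : ℕ) ≠ 0), v i := by
    rw [card_checksumArray_rows]
    congr 1
    ext i
    simp
  exact ⟨checksumArray v 0 ∘ (Fintype.equivFinOfCardEq hrows).symm,
    (isMCA_checksumArray (by omega) (fun j => hmono (Fin.zero_le j)) (by simp)).comp_equiv _⟩

/-- Lemma: for any `t ≥ 2` and `2 ≤ v_1 ≤ ⋯ ≤ v_{t+1}` there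
exists an `MCA(N; t, t+1, (v_1,…,v_{t+1}))` of optimum size
`N = ∏_{i=2}^{t+1} v_i`. -/
theorem stmt_18 {t : ℕ} (ht : 2 ≤ t)
    (v : Fin (t + 1) → ℕ) (hmono : Monotone v) (hv2 : 2 ≤ v 0) :
    ∃ A : Fin (∏ i ∈ Finset.univ.filter (fun i : Fin (t + 1) => (i : ℕ) ≠ 0), v i) →
        Fin (t + 1) → ℕ,
      IsMCA v 1 t A :=
  stmt_18_general v hmono hv2
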